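/- Let m ≥ 1 and let n = |Q₀| be even, char K arbitrary (or n arbitrary with char K = 2). For the truncated cyclic quiver algebra Λ = KQ/(KQ)_{≥2} with n vertices and automorphisms μ̄, η̄ as above, the automorphism μ̄ ∘ η̄^{-1} is inner; consequently Ω_{Λ^e}(Λ) ≅ _{η̄}Λ_1, i.e. the Calabi–Yau Frobenius dimension of Λ is 0. -/

import Mathlib

open TensorProduct

/-- Left multiplication by `b` on the first tensor factor of `Λ ⊗[K] Λ`. -/
noncomputable def lAct (K Λ : Type*) [CommRing K] [Ring Λ] [Algebra K Λ] (b : Λ) :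
    TensorProduct K Λ Λ →ₗ[K] TensorProduct K Λ Λ :=
  LinearMap.rTensor Λ (LinearMap.mulLeft K b)

/-- Right multiplication by `b` on the second tensor factor of `Λ ⊗[K] Λ`. -/
noncomputable def rAct (K Λ : Type*) [CommRing K] [Ring Λ] [Algebra K Λ] (b : Λ) :
    TensorProduct K Λ Λ →ₗ[K] TensorProduct K Λ Λ :=
  LinearMap.lTensor Λ (LinearMap.mulRight K b)

/-!
Put `u = ∑ᵢ (-1)ⁱ eᵢ`. Then `u² = 1`, `u eᵢ u = eᵢ` and `u aᵢ u = (-1)ⁱ (-1)ⁱ⁺¹ aᵢ`. As the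
indices live in `ℤ/n`, this is `-aᵢ` for every `i` exactly when `(-1)ⁿ = 1`, i.e. `n` is even
or `char K = 2`. This is the action of `μ̄ η̄⁻¹` on the basis, so `μ̄ η̄⁻¹` is conjugation by `u`.

For the syzygy put `ω = ∑ᵢ (-1)ⁱ⁺¹ (aᵢ ⊗ eᵢ₊₁ - eᵢ ⊗ aᵢ)` and `g y = ω (1 ⊗ y)` in the algebra
`Λ ⊗ Λ`. The same sign computation gives `(b ⊗ 1) ω = ω (1 ⊗ η̄ b)`, so `g` is a bimodule map
`_{η̄}Λ_1 → Λ ⊗ Λ`. It lands in the kernel of multiplication on the projective cover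
`P = ⨁ᵢ Λeᵢ ⊗ eᵢΛ`, and `x ⊗ y ↦ φ(x) y`, with `φ aᵢ = (-1)ⁱ⁺¹ eᵢ₊₁` and `φ eᵢ = 0`, is a left
inverse. Finally `dim P ≤ 4n` and multiplication maps `P` onto `Λ`, of dimension `2n`, so that
kernel has dimension at most `2n = dim (range g)`.
-/

section Sign

variable (K : Type*) [Ring K] {n : ℕ}

-- `(-1)ⁱ` read off the representative `i.val ∈ [0, n)`, so `altSign (i + 1) = -altSign i` fails
-- at `i = -1` unless `(-1)ⁿ = 1`.
def altSign (i : ZMod n) : K := (-1) ^ i.val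

lemma altSign_mul_self (i : ZMod n) : altSign K i * altSign K i = 1 := by
  rw [altSign, ← pow_add, ← two_mul, pow_mul, neg_one_sq, one_pow]

variable {K}

lemma neg_one_pow_eq_one_of_even_or_ringChar_eq_two (h : Even n ∨ ringChar K = 2) :
    (-1 : K) ^ n = 1 := by
  rcases h with h | h
  · exact h.neg_one_pow
  · have : CharP K 2 := ringChar.of_eq h
    rw [CharTwo.neg_eq, one_pow]

lemma altSign_add_one [NeZero n] (h : (-1 : K) ^ n = 1) (i : ZMod n) :
    altSign K (i + 1) = -altSign K i := by
  rw [altSign, altSign, ZMod.val_add, ZMod.val_one_eq_one_mod, ← pow_eq_pow_mod _ h,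
    pow_add, ← pow_eq_pow_mod _ h, pow_one, mul_neg_one]

end Sign

section Sums

variable {ι K Λ : Type*} [Fintype ι] [DecidableEq ι] [CommSemiring K] [Semiring Λ] [Algebra K Λ]

lemma sum_smul_mul_of_mul_eq_ite {e : ι → Λ} {x : Λ} {j : ι}
    (h : ∀ i, e i * x = if i = j then x else 0) (s : ι → K) :
    (∑ i, s i • e i) * x = s j • x := by
  simp [Finset.sum_mul, h]

lemma mul_sum_smul_of_mul_eq_ite {e : ι → Λ} {x : Λ} {j : ι}
    (h : ∀ i, x * e i = if i = j then x else 0) (s : ι → K) :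
    x * (∑ i, s i • e i) = s j • x := by
  simp [Finset.mul_sum, h]

end Sums

lemma AlgEquiv.symm_apply_of_apply_add_one {K Λ G : Type*} [CommRing K] [Ring Λ]
    [Algebra K Λ] [AddGroupWithOne G] (η : Λ ≃ₐ[K] Λ) {x : G → Λ}
    (hη : ∀ i, η (x i) = x (i + 1)) (i : G) : η.symm (x i) = x (i - 1) := by
  rw [AlgEquiv.symm_apply_eq, hη, sub_add_cancel]

lemma Module.Basis.apply_mem_of_forall {ι R M N : Type*} [Semiring R] [AddCommMonoid M]
    [Module R M] [AddCommMonoid N] [Module R N] (bas : Module.Basis ι R M) (f : M →ₗ[R] N)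
    {p : Submodule R N} (h : ∀ i, f (bas i) ∈ p) (x : M) : f x ∈ p := by
  have : Submodule.span R (Set.range bas) ≤ p.comap f :=
    Submodule.span_le.2 (Set.range_subset_iff.2 h)
  exact this (bas.span_eq ▸ Submodule.mem_top)

lemma finrank_inf_ker_add_finrank_map {K M N : Type*} [DivisionRing K] [AddCommGroup M]
    [Module K M] [AddCommGroup N] [Module K N] [FiniteDimensional K M] (p : Submodule K M)
    (f : M →ₗ[K] N) :
    Module.finrank K ↥(p ⊓ LinearMap.ker f) + Module.finrank K ↥(p.map f) =
      Module.finrank K p := by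
  rw [← LinearMap.range_domRestrict, ← Submodule.map_comap_subtype, add_comm,
    ← LinearMap.finrank_range_add_finrank_ker (f.domRestrict p), LinearMap.ker_domRestrict,
    (Submodule.equivSubtypeMap p _).finrank_eq]

section Bimodule

variable {K Λ : Type*} [CommRing K] [Ring Λ] [Algebra K Λ]

lemma lAct_apply (b : Λ) (t : Λ ⊗[K] Λ) : lAct K Λ b t = (b ⊗ₜ 1) * t := by
  induction t using TensorProduct.induction_on with
  | zero => simp
  | tmul x y => simp [lAct, Algebra.TensorProduct.tmul_mul_tmul]
  | add x y hx hy => simp [hx, hy, mul_add]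

lemma rAct_apply (c : Λ) (t : Λ ⊗[K] Λ) : rAct K Λ c t = t * (1 ⊗ₜ c) := by
  induction t using TensorProduct.induction_on with
  | zero => simp
  | tmul x y => simp [rAct, Algebra.TensorProduct.tmul_mul_tmul]
  | add x y hx hy => simp [hx, hy, add_mul]

lemma lAct_rAct_tmul (b c x y : Λ) :
    lAct K Λ b (rAct K Λ c (x ⊗ₜ y)) = (b * x) ⊗ₜ (y * c) := by
  simp [lAct, rAct]

lemma mul'_rTensor_mul_one_tmul (φ : Λ →ₗ[K] Λ) (t : Λ ⊗[K] Λ) (y : Λ) :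
    LinearMap.mul' K Λ (φ.rTensor Λ (t * (1 ⊗ₜ y))) =
      LinearMap.mul' K Λ (φ.rTensor Λ t) * y := by
  induction t using TensorProduct.induction_on with
  | zero => simp
  | tmul x z => simp [Algebra.TensorProduct.tmul_mul_tmul, mul_assoc]
  | add x z hx hz => simp [hx, hz, add_mul]

lemma mul'_mul_one_tmul (t : Λ ⊗[K] Λ) (y : Λ) :
    LinearMap.mul' K Λ (t * (1 ⊗ₜ y)) = LinearMap.mul' K Λ t * y := by
  simpa using mul'_rTensor_mul_one_tmul LinearMap.id t y

end Bimodule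

section ProjCover

variable {K Λ ι : Type*} [CommRing K] [Ring Λ] [Algebra K Λ] {e : ι → Λ}

variable (K e) in
/-- The image of `⨁ᵢ Λ eᵢ ⊗ eᵢ Λ` in `Λ ⊗ Λ`, the projective cover of `Λ` as a bimodule. -/
def bimoduleProjCover : Submodule K (Λ ⊗[K] Λ) :=
  Submodule.span K {t | ∃ b c i, t = lAct K Λ b (rAct K Λ c (e i ⊗ₜ[K] e i))}

lemma tmul_mem_bimoduleProjCover (b c : Λ) (i : ι) :
    (b * e i) ⊗ₜ (e i * c) ∈ bimoduleProjCover K e :=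
  Submodule.subset_span ⟨b, c, i, (lAct_rAct_tmul b c _ _).symm⟩

lemma mul_one_tmul_mem_bimoduleProjCover {t : Λ ⊗[K] Λ} (ht : t ∈ bimoduleProjCover K e)
    (y : Λ) : t * (1 ⊗ₜ y) ∈ bimoduleProjCover K e := by
  induction ht using Submodule.span_induction with
  | mem t ht =>
    obtain ⟨b, c, i, rfl⟩ := ht
    rw [lAct_rAct_tmul, Algebra.TensorProduct.tmul_mul_tmul, mul_one, mul_assoc]
    exact tmul_mem_bimoduleProjCover b (c * y) i
  | zero => simp
  | add t t' _ _ ht ht' => simpa [add_mul] using add_mem ht ht'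
  | smul k t _ ht => simpa using Submodule.smul_mem _ k ht

end ProjCover

/-- The multiplication table of the truncated cyclic quiver algebra `KQ/(KQ)_{≥2}` in the basis
of vertices `e i` and arrows `a i : i → i + 1`, with paths written left to right. -/
structure TruncatedCyclicRelations {n : ℕ} [NeZero n] {Λ : Type*} [Ring Λ]
    (e a : ZMod n → Λ) : Prop where
  ee : ∀ i j, e i * e j = if i = j then e i else 0
  ea : ∀ i j, e i * a j = if i = j then a j else 0
  ae : ∀ i j, a i * e j = if j = i + 1 then a i else 0
  aa : ∀ i j, a i * a j = 0
  sum_e : ∑ i, e i = 1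

section InnerAutomorphism

variable {K Λ : Type*} [CommRing K] [Ring Λ] [Algebra K Λ] {n : ℕ} [NeZero n]
  {e a : ZMod n → Λ}

variable (K e) in
def signedVertexSum : Λ := ∑ i, altSign K i • e i

lemma signedVertexSum_mul_e (h : TruncatedCyclicRelations e a) (j : ZMod n) :
    signedVertexSum K e * e j = altSign K j • e j :=
  sum_smul_mul_of_mul_eq_ite (fun i => by rw [h.ee]; by_cases hij : i = j <;> simp [hij]) _

lemma e_mul_signedVertexSum (h : TruncatedCyclicRelations e a) (j : ZMod n) :
    e j * signedVertexSum K e = altSign K j • e j :=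
  mul_sum_smul_of_mul_eq_ite
    (fun i => by rw [h.ee]; by_cases hij : i = j <;> simp [hij, Ne.symm]) _

lemma signedVertexSum_mul_a (h : TruncatedCyclicRelations e a) (j : ZMod n) :
    signedVertexSum K e * a j = altSign K j • a j :=
  sum_smul_mul_of_mul_eq_ite (h.ea · j) _

lemma a_mul_signedVertexSum (h : TruncatedCyclicRelations e a) (j : ZMod n) :
    a j * signedVertexSum K e = altSign K (j + 1) • a j :=
  mul_sum_smul_of_mul_eq_ite (h.ae j) _

lemma signedVertexSum_mul_self (h : TruncatedCyclicRelations e a) :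
    signedVertexSum K e * signedVertexSum K e = 1 := by
  conv_lhs => enter [2]; rw [signedVertexSum]
  simp only [Finset.mul_sum, mul_smul_comm, signedVertexSum_mul_e h, smul_smul,
    altSign_mul_self, one_smul, h.sum_e]

lemma signedVertexSum_conj_e (h : TruncatedCyclicRelations e a) (j : ZMod n) :
    signedVertexSum K e * e j * signedVertexSum K e = e j := by
  rw [signedVertexSum_mul_e h, smul_mul_assoc, e_mul_signedVertexSum h, smul_smul,
    altSign_mul_self, one_smul]

lemma signedVertexSum_conj_a (h : TruncatedCyclicRelations e a) (hsign : (-1 : K) ^ n = 1)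
    (j : ZMod n) : signedVertexSum K e * a j * signedVertexSum K e = -a j := by
  rw [signedVertexSum_mul_a h, smul_mul_assoc, a_mul_signedVertexSum h, smul_smul,
    altSign_add_one hsign, mul_neg, altSign_mul_self, neg_one_smul]

theorem mul_inv_apply_eq_signedVertexSum_conj (bas : Module.Basis (ZMod n ⊕ ZMod n) K Λ)
    (hbas : ∀ i, bas (Sum.inl i) = e i ∧ bas (Sum.inr i) = a i)
    (h : TruncatedCyclicRelations e a) (hsign : (-1 : K) ^ n = 1) (μ η : Λ ≃ₐ[K] Λ)
    (hμe : ∀ i, μ (e i) = e (i + 1)) (hμa : ∀ i, μ (a i) = -a (i + 1))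
    (hηe : ∀ i, η (e i) = e (i + 1)) (hηa : ∀ i, η (a i) = a (i + 1)) (y : Λ) :
    (μ * η⁻¹) y = signedVertexSum K e * y * signedVertexSum K e := by
  have key : (μ * η⁻¹).toLinearMap = LinearMap.mulRight K (signedVertexSum K e) ∘ₗ
      LinearMap.mulLeft K (signedVertexSum K e) := by
    refine bas.ext fun j => ?_
    rcases j with i | i
    · simp [(hbas i).1, η.symm_apply_of_apply_add_one hηe, hμe, signedVertexSum_conj_e h]
    · simp [(hbas i).2, η.symm_apply_of_apply_add_one hηa, hμa,
        signedVertexSum_conj_a h hsign]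
  exact LinearMap.congr_fun key y

end InnerAutomorphism

section Syzygy

variable {K Λ : Type*} [CommRing K] [Ring Λ] [Algebra K Λ] {n : ℕ} [NeZero n]
  {e a : ZMod n → Λ}

variable (K e a) in
def syzygyGen : Λ ⊗[K] Λ := ∑ i, altSign K (i + 1) • (a i ⊗ₜ e (i + 1) - e i ⊗ₜ a i)

variable (K e a) in
def syzygyMap : Λ →ₗ[K] Λ ⊗[K] Λ :=
  LinearMap.mulLeft K (syzygyGen K e a) ∘ₗ Algebra.TensorProduct.includeRight.toLinearMap

lemma syzygyMap_apply (y : Λ) : syzygyMap K e a y = syzygyGen K e a * (1 ⊗ₜ y) := rfl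

lemma syzygyMap_mul (y b : Λ) :
    syzygyMap K e a (y * b) = rAct K Λ b (syzygyMap K e a y) := by
  simp [syzygyMap_apply, rAct_apply, mul_assoc, Algebra.TensorProduct.tmul_mul_tmul]

lemma e_tmul_one_mul_syzygyGen (h : TruncatedCyclicRelations e a) (k : ZMod n) :
    (e k ⊗ₜ (1 : Λ)) * syzygyGen K e a = syzygyGen K e a * (1 ⊗ₜ e (k + 1)) := by
  simp [syzygyGen, Finset.mul_sum, Finset.sum_mul, mul_sub, sub_mul,
    Algebra.TensorProduct.tmul_mul_tmul, h.ee, h.ea, h.ae, ite_tmul, tmul_ite, smul_sub,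
    Finset.sum_sub_distrib, smul_ite]

lemma a_tmul_one_mul_syzygyGen (h : TruncatedCyclicRelations e a) (hsign : (-1 : K) ^ n = 1)
    (k : ZMod n) :
    (a k ⊗ₜ (1 : Λ)) * syzygyGen K e a = syzygyGen K e a * (1 ⊗ₜ a (k + 1)) := by
  simp [syzygyGen, Finset.mul_sum, Finset.sum_mul, mul_sub, sub_mul,
    Algebra.TensorProduct.tmul_mul_tmul, h.ea, h.ae, h.aa, ite_tmul, tmul_ite,
    altSign_add_one hsign]

lemma tmul_one_mul_syzygyGen (bas : Module.Basis (ZMod n ⊕ ZMod n) K Λ)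
    (hbas : ∀ i, bas (Sum.inl i) = e i ∧ bas (Sum.inr i) = a i)
    (h : TruncatedCyclicRelations e a) (hsign : (-1 : K) ^ n = 1) (η : Λ ≃ₐ[K] Λ)
    (hηe : ∀ i, η (e i) = e (i + 1)) (hηa : ∀ i, η (a i) = a (i + 1)) (b : Λ) :
    (b ⊗ₜ 1) * syzygyGen K e a = syzygyGen K e a * (1 ⊗ₜ η b) := by
  have key : LinearMap.mulRight K (syzygyGen K e a) ∘ₗ
      Algebra.TensorProduct.includeLeft.toLinearMap = LinearMap.mulLeft K (syzygyGen K e a) ∘ₗ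
      Algebra.TensorProduct.includeRight.toLinearMap ∘ₗ η.toLinearMap := by
    refine bas.ext fun j => ?_
    rcases j with i | i
    · simp [(hbas i).1, hηe, e_tmul_one_mul_syzygyGen h]
    · simp [(hbas i).2, hηa, a_tmul_one_mul_syzygyGen h hsign]
  exact LinearMap.congr_fun key b

lemma syzygyMap_twisted_mul (bas : Module.Basis (ZMod n ⊕ ZMod n) K Λ)
    (hbas : ∀ i, bas (Sum.inl i) = e i ∧ bas (Sum.inr i) = a i)
    (h : TruncatedCyclicRelations e a) (hsign : (-1 : K) ^ n = 1) (η : Λ ≃ₐ[K] Λ)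
    (hηe : ∀ i, η (e i) = e (i + 1)) (hηa : ∀ i, η (a i) = a (i + 1)) (b y : Λ) :
    syzygyMap K e a (η b * y) = lAct K Λ b (syzygyMap K e a y) := by
  rw [syzygyMap_apply, syzygyMap_apply, lAct_apply, ← mul_assoc,
    tmul_one_mul_syzygyGen bas hbas h hsign η hηe hηa, mul_assoc,
    Algebra.TensorProduct.tmul_mul_tmul, one_mul]

lemma syzygyMap_injective (bas : Module.Basis (ZMod n ⊕ ZMod n) K Λ)
    (hbas : ∀ i, bas (Sum.inl i) = e i ∧ bas (Sum.inr i) = a i)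
    (h : TruncatedCyclicRelations e a) : Function.Injective (syzygyMap K e a) := by
  obtain ⟨φ, hφe, hφa⟩ : ∃ φ : Λ →ₗ[K] Λ,
      (∀ i, φ (e i) = 0) ∧ ∀ i, φ (a i) = altSign K (i + 1) • e (i + 1) :=
    ⟨bas.constr K (Sum.elim 0 fun i => altSign K (i + 1) • e (i + 1)),
      fun i => by simp [← (hbas i).1], fun i => by simp [← (hbas i).2]⟩
  have hφ : LinearMap.mul' K Λ (φ.rTensor Λ (syzygyGen K e a)) = 1 := by
    simpa [syzygyGen, hφe, hφa, smul_smul, altSign_mul_self, h.ee] using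
      (Equiv.sum_comp (Equiv.addRight (1 : ZMod n)) e).trans h.sum_e
  refine Function.LeftInverse.injective (g := fun t => LinearMap.mul' K Λ (φ.rTensor Λ t))
    fun y => ?_
  simp only [syzygyMap_apply, mul'_rTensor_mul_one_tmul, hφ, one_mul]

lemma syzygyGen_mem_bimoduleProjCover (h : TruncatedCyclicRelations e a) :
    syzygyGen K e a ∈ bimoduleProjCover K e := by
  refine Submodule.sum_mem _ fun i _ => Submodule.smul_mem _ _ (Submodule.sub_mem _ ?_ ?_)
  · simpa [h.ae, h.ee] using tmul_mem_bimoduleProjCover (K := K) (e := e) (a i) (e (i + 1)) (i + 1)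
  · simpa [h.ee, h.ea] using tmul_mem_bimoduleProjCover (K := K) (e := e) (e i) (a i) i

lemma mul'_syzygyGen (h : TruncatedCyclicRelations e a) :
    LinearMap.mul' K Λ (syzygyGen K e a) = 0 := by
  simp [syzygyGen, h.ae, h.ea]

lemma syzygyMap_mem (h : TruncatedCyclicRelations e a) (y : Λ) :
    syzygyMap K e a y ∈ bimoduleProjCover K e ⊓ LinearMap.ker (LinearMap.mul' K Λ) :=
  ⟨mul_one_tmul_mem_bimoduleProjCover (syzygyGen_mem_bimoduleProjCover h) y, by
    simp [syzygyMap_apply, mul'_mul_one_tmul, mul'_syzygyGen h]⟩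

end Syzygy

section Dimension

variable {K Λ : Type*} [Field K] [Ring Λ] [Algebra K Λ] {n : ℕ} [NeZero n]
  {e a : ZMod n → Λ}

lemma mul_e_mem_span (bas : Module.Basis (ZMod n ⊕ ZMod n) K Λ)
    (hbas : ∀ i, bas (Sum.inl i) = e i ∧ bas (Sum.inr i) = a i)
    (h : TruncatedCyclicRelations e a) (b : Λ) (i : ZMod n) :
    b * e i ∈ Submodule.span K {e i, a (i - 1)} := by
  refine bas.apply_mem_of_forall (LinearMap.mulRight K (e i)) (fun j => ?_) b
  rcases j with k | k
  · rw [(hbas k).1, LinearMap.mulRight_apply, h.ee]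
    split_ifs with hk
    · exact Submodule.subset_span (by simp [hk])
    · exact zero_mem _
  · rw [(hbas k).2, LinearMap.mulRight_apply, h.ae]
    split_ifs with hk
    · exact Submodule.subset_span (by simp [hk])
    · exact zero_mem _

lemma e_mul_mem_span (bas : Module.Basis (ZMod n ⊕ ZMod n) K Λ)
    (hbas : ∀ i, bas (Sum.inl i) = e i ∧ bas (Sum.inr i) = a i)
    (h : TruncatedCyclicRelations e a) (c : Λ) (i : ZMod n) :
    e i * c ∈ Submodule.span K {e i, a i} := by
  refine bas.apply_mem_of_forall (LinearMap.mulLeft K (e i)) (fun j => ?_) c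
  rcases j with k | k
  · rw [(hbas k).1, LinearMap.mulLeft_apply, h.ee]
    split_ifs with hk
    · exact Submodule.subset_span (by simp)
    · exact zero_mem _
  · rw [(hbas k).2, LinearMap.mulLeft_apply, h.ea]
    split_ifs with hk
    · exact Submodule.subset_span (by simp [hk])
    · exact zero_mem _

lemma finrank_bimoduleProjCover_le (bas : Module.Basis (ZMod n ⊕ ZMod n) K Λ)
    (hbas : ∀ i, bas (Sum.inl i) = e i ∧ bas (Sum.inr i) = a i)
    (h : TruncatedCyclicRelations e a) :
    Module.finrank K (bimoduleProjCover K e) ≤ 4 * n := by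
  classical
  set S : Finset (Λ ⊗[K] Λ) :=
    Finset.univ.biUnion fun i => Finset.image₂ (· ⊗ₜ ·) {e i, a (i - 1)} {e i, a i}
  have hle : bimoduleProjCover K e ≤ Submodule.span K S := by
    refine Submodule.span_le.2 ?_
    rintro _ ⟨b, c, i, rfl⟩
    have hmem := Submodule.apply_mem_map₂ (TensorProduct.mk K Λ Λ)
      (mul_e_mem_span bas hbas h b i) (e_mul_mem_span bas hbas h c i)
    rw [Submodule.map₂_span_span] at hmem
    rw [lAct_rAct_tmul]
    refine Submodule.span_mono (fun t ht => ?_) hmem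
    exact Finset.mem_biUnion.2 ⟨i, Finset.mem_univ _, by
      rw [← Finset.mem_coe, Finset.coe_image₂]; simpa using ht⟩
  calc Module.finrank K (bimoduleProjCover K e)
      ≤ Module.finrank K (Submodule.span K (S : Set (Λ ⊗[K] Λ))) := Submodule.finrank_mono hle
    _ ≤ S.card := finrank_span_finset_le_card S
    _ ≤ ∑ _i : ZMod n, 2 * 2 := Finset.card_biUnion_le.trans (Finset.sum_le_sum fun i _ =>
        (Finset.card_image₂_le _ _ _).trans
          (Nat.mul_le_mul Finset.card_le_two Finset.card_le_two))
    _ = 4 * n := by simp [mul_comm]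

lemma map_mul'_bimoduleProjCover (bas : Module.Basis (ZMod n ⊕ ZMod n) K Λ)
    (hbas : ∀ i, bas (Sum.inl i) = e i ∧ bas (Sum.inr i) = a i)
    (h : TruncatedCyclicRelations e a) :
    (bimoduleProjCover K e).map (LinearMap.mul' K Λ) = ⊤ := by
  rw [eq_top_iff, ← bas.span_eq, Submodule.span_le]
  rintro _ ⟨i | i, rfl⟩
  · exact ⟨_, tmul_mem_bimoduleProjCover (e i) (e i) i, by simp [(hbas i).1, h.ee]⟩
  · exact ⟨_, tmul_mem_bimoduleProjCover (e i) (a i) i, by simp [(hbas i).2, h.ee, h.ea]⟩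

lemma finrank_bimoduleProjCover_inf_ker_le (bas : Module.Basis (ZMod n ⊕ ZMod n) K Λ)
    (hbas : ∀ i, bas (Sum.inl i) = e i ∧ bas (Sum.inr i) = a i)
    (h : TruncatedCyclicRelations e a) :
    Module.finrank K ↥(bimoduleProjCover K e ⊓ LinearMap.ker (LinearMap.mul' K Λ)) ≤
      Module.finrank K Λ := by
  have : Module.Finite K Λ := Module.Finite.of_basis bas
  have hsum := finrank_inf_ker_add_finrank_map (bimoduleProjCover K e) (LinearMap.mul' K Λ)
  rw [map_mul'_bimoduleProjCover bas hbas h, finrank_top] at hsum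
  have hΛ : Module.finrank K Λ = n + n := by
    simp [Module.finrank_eq_card_basis bas]
  have := finrank_bimoduleProjCover_le bas hbas h
  omega

lemma range_syzygyMap (bas : Module.Basis (ZMod n ⊕ ZMod n) K Λ)
    (hbas : ∀ i, bas (Sum.inl i) = e i ∧ bas (Sum.inr i) = a i)
    (h : TruncatedCyclicRelations e a) :
    LinearMap.range (syzygyMap K e a) =
      bimoduleProjCover K e ⊓ LinearMap.ker (LinearMap.mul' K Λ) := by
  have : Module.Finite K Λ := Module.Finite.of_basis bas
  refine Submodule.eq_of_le_of_finrank_le ?_ ?_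
  · rintro _ ⟨y, rfl⟩
    exact syzygyMap_mem h y
  · rw [LinearMap.finrank_range_of_inj (syzygyMap_injective bas hbas h)]
    exact finrank_bimoduleProjCover_inf_ker_le bas hbas h

end Dimension

theorem stmt_18_general (K : Type*) [Field K] (n : ℕ) [NeZero n]
    (hcase : Even n ∨ ringChar K = 2)
    (Λ : Type*) [Ring Λ] [Algebra K Λ]
    (e a : ZMod n → Λ)
    (bas : Module.Basis (ZMod n ⊕ ZMod n) K Λ)
    (hbas : ∀ i, bas (Sum.inl i) = e i ∧ bas (Sum.inr i) = a i)
    (hee : ∀ i j, e i * e j = if i = j then e i else 0)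
    (hea : ∀ i j, e i * a j = if i = j then a j else 0)
    (hae : ∀ i j, a i * e j = if j = i + 1 then a i else 0)
    (haa : ∀ i j, a i * a j = 0)
    (hone : (∑ i, e i) = 1)
    (μbar ηbar : Λ ≃ₐ[K] Λ)
    (hμe : ∀ i, μbar (e i) = e (i + 1))
    (hμa : ∀ i, μbar (a i) = -(a (i + 1)))
    (hηe : ∀ i, ηbar (e i) = e (i + 1))
    (hηa : ∀ i, ηbar (a i) = a (i + 1))
    (Ker : Submodule K (TensorProduct K Λ Λ))
    (hKer : Ker =
      Submodule.span K {t | ∃ b c i, t = lAct K Λ b (rAct K Λ c (e i ⊗ₜ[K] e i))} ⊓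
        LinearMap.ker (LinearMap.mul' K Λ)) :
    (∃ u : Λˣ, ∀ y : Λ,
        (μbar * ηbar⁻¹) y = (u : Λ) * y * ((u⁻¹ : Λˣ) : Λ)) ∧
    ∃ g : Λ →ₗ[K] TensorProduct K Λ Λ,
      Function.Injective g ∧ LinearMap.range g = Ker ∧
      (∀ b y, g (ηbar b * y) = lAct K Λ b (g y)) ∧
      (∀ b y, g (y * b) = rAct K Λ b (g y)) := by
  have h : TruncatedCyclicRelations e a := ⟨hee, hea, hae, haa, hone⟩
  have hsign := neg_one_pow_eq_one_of_even_or_ringChar_eq_two (K := K) hcase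
  have hu := signedVertexSum_mul_self (K := K) h
  exact ⟨⟨⟨_, _, hu, hu⟩, mul_inv_apply_eq_signedVertexSum_conj bas hbas h hsign μbar ηbar
    hμe hμa hηe hηa⟩, syzygyMap K e a, syzygyMap_injective bas hbas h,
    (range_syzygyMap bas hbas h).trans hKer.symm,
    syzygyMap_twisted_mul bas hbas h hsign ηbar hηe hηa, fun b y => syzygyMap_mul y b⟩

/-- for the truncated cyclic quiver algebra `Λ` with `n` vertices, if `n`
is even or `char K = 2`, then `μ̄ ∘ η̄⁻¹` is inner; consequently
`Ω_{Λ^e}(Λ) ≅ _{η̄}Λ_1` as `Λ`-bimodules, i.e. the Calabi–Yau Frobenius dimension of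
`Λ` is `0`. -/
theorem stmt_18 (K : Type*) [Field K] (n : ℕ) [NeZero n] (hn : 1 ≤ n)
    (hcase : Even n ∨ ringChar K = 2)
    (Λ : Type*) [Ring Λ] [Algebra K Λ]
    (e a : ZMod n → Λ)
    (bas : Module.Basis (ZMod n ⊕ ZMod n) K Λ)
    (hbas : ∀ i, bas (Sum.inl i) = e i ∧ bas (Sum.inr i) = a i)
    (hee : ∀ i j, e i * e j = if i = j then e i else 0)
    (hea : ∀ i j, e i * a j = if i = j then a j else 0)
    (hae : ∀ i j, a i * e j = if j = i + 1 then a i else 0)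
    (haa : ∀ i j, a i * a j = 0)
    (hone : (∑ i, e i) = 1)
    (μbar ηbar : Λ ≃ₐ[K] Λ)
    (hμe : ∀ i, μbar (e i) = e (i + 1))
    (hμa : ∀ i, μbar (a i) = -(a (i + 1)))
    (hηe : ∀ i, ηbar (e i) = e (i + 1))
    (hηa : ∀ i, ηbar (a i) = a (i + 1))
    (Ker : Submodule K (TensorProduct K Λ Λ))
    (hKer : Ker =
      Submodule.span K {t | ∃ b c i, t = lAct K Λ b (rAct K Λ c (e i ⊗ₜ[K] e i))} ⊓
        LinearMap.ker (LinearMap.mul' K Λ)) :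
    (∃ u : Λˣ, ∀ y : Λ,
        (μbar * ηbar⁻¹) y = (u : Λ) * y * ((u⁻¹ : Λˣ) : Λ)) ∧
    ∃ g : Λ →ₗ[K] TensorProduct K Λ Λ,
      Function.Injective g ∧ LinearMap.range g = Ker ∧
      (∀ b y, g (ηbar b * y) = lAct K Λ b (g y)) ∧
      (∀ b y, g (y * b) = rAct K Λ b (g y)) :=
  stmt_18_general K n hcase Λ e a bas hbas hee hea hae haa hone μbar ηbar hμe hμa hηe hηa Ker hKer
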